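/- The acceptance probability function of any NQFA on word w = σ_1⋯σ_k can be written as a product of matrices: there exist a real row vector u, real matrices B_σ (σ ∈ Σ, each of dimension at most 2n²+2), and a real column vector g, such that the acceptance probability equals u B_{σ_1}⋯B_{σ_k} g, where n is the number of states of the NQFA. -/

import Mathlib

open Matrix
noncomputable section

/-- A Nayak quantum finite automaton: on each symbol it applies a unitary `U σ`,
then the projective measurement `{P σ i}`, then the projective measurement with
outcomes accept/reject/non-halting given by orthogonal projections `Pa, Pr, Pn`. -/
structure NQFA (Alph : Type) where
  n : ℕ
  U : Alph → Matrix (Fin n) (Fin n) ℂ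
  hU : ∀ σ, U σ ∈ Matrix.unitaryGroup (Fin n) ℂ
  outcomes : ℕ
  P : Alph → Fin outcomes → Matrix (Fin n) (Fin n) ℂ
  hP_herm : ∀ σ i, (P σ i).IsHermitian
  hP_idem : ∀ σ i, P σ i * P σ i = P σ i
  hP_sum : ∀ σ, ∑ i, P σ i = 1
  Pa : Matrix (Fin n) (Fin n) ℂ
  Pr : Matrix (Fin n) (Fin n) ℂ
  Pn : Matrix (Fin n) (Fin n) ℂ
  hPa : Pa.IsHermitian ∧ Pa * Pa = Pa
  hPr : Pr.IsHermitian ∧ Pr * Pr = Pr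
  hPn : Pn.IsHermitian ∧ Pn * Pn = Pn
  hHalt_sum : Pa + Pr + Pn = 1
  init : Fin n → ℂ
  hinit : ∑ i, Complex.normSq (init i) = 1

namespace NQFA

variable {Alph : Type} (M : NQFA Alph)

/-- The initial density matrix `|q₀⟩⟨q₀|`. -/
def rho0 : Matrix (Fin M.n) (Fin M.n) ℂ :=
  fun i j => M.init i * star (M.init j)

/-- The post-operation density matrix for one symbol: apply the unitary,
then sum over the outcomes of the symbol's projective measurement. -/
def postOp (σ : Alph) (X : Matrix (Fin M.n) (Fin M.n) ℂ) :
    Matrix (Fin M.n) (Fin M.n) ℂ :=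
  ∑ i, M.P σ i * (M.U σ * X * (M.U σ)ᴴ) * (M.P σ i)ᴴ

/-- One full computation step on the state `(ρ, p_acc, p_rej)`: the non-halted
density matrix together with accumulated accept and reject probabilities. -/
def step (s : Matrix (Fin M.n) (Fin M.n) ℂ × ℝ × ℝ) (σ : Alph) :
    Matrix (Fin M.n) (Fin M.n) ℂ × ℝ × ℝ :=
  (M.Pn * M.postOp σ s.1 * M.Pnᴴ,
   s.2.1 + (Matrix.trace (M.Pa * M.postOp σ s.1)).re,
   s.2.2 + (Matrix.trace (M.Pr * M.postOp σ s.1)).re)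

/-- Running the NQFA on a word. -/
def run (w : List Alph) : Matrix (Fin M.n) (Fin M.n) ℂ × ℝ × ℝ :=
  w.foldl M.step (M.rho0, 0, 0)

/-- The acceptance probability function of the NQFA. -/
def accProb (w : List Alph) : ℝ := (M.run w).2.1

/-- The total rejection probability of the NQFA. -/
def rejProb (w : List Alph) : ℝ := (M.run w).2.2

/-- The density matrix of the non-halted part of the computation. -/
def curRho (w : List Alph) : Matrix (Fin M.n) (Fin M.n) ℂ := (M.run w).1

end NQFA

/-! Carrying the rejection probability along, one step of the automaton is a real-linear map on
the space of states `(ρ, p_acc, p_rej)`, whose real dimension is `2n² + 2`, and the acceptance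
probability is a linear functional of the final state. Writing the step maps in a basis turns
any such linear automaton into a product of matrices. -/

open Module

theorem exists_dotProduct_prod_mulVec_eq_foldl {K V ι : Type*} [Field K] [AddCommGroup V]
    [Module K V] [FiniteDimensional K V] (T : ι → V →ₗ[K] V) (x₀ : V) (φ : V →ₗ[K] K) :
    ∃ (u : Fin (finrank K V) → K) (B : ι → Matrix (Fin (finrank K V)) (Fin (finrank K V)) K)
      (g : Fin (finrank K V) → K),
      ∀ w : List ι, φ (w.foldl (fun x σ => T σ x) x₀) = u ⬝ᵥ (w.map B).prod *ᵥ g := by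
  let b := finBasis K V
  -- transposed, so that the letters of `w` act on the row vector `u` from left to right
  let B σ := (LinearMap.toMatrix b b (T σ))ᵀ
  have repr_foldl (w : List ι) (x : V) :
      b.repr (w.foldl (fun x σ => T σ x) x) = b.repr x ᵥ* (w.map B).prod := by
    induction w generalizing x with
    | nil => simp
    | cons σ w ih =>
      rw [List.foldl_cons, ih, List.map_cons, List.prod_cons, ← vecMul_vecMul, vecMul_transpose,
        LinearMap.toMatrix_mulVec_repr]
  have φ_eq (x : V) : φ x = b.repr x ⬝ᵥ fun i => φ (b i) := by
    conv_lhs => rw [← b.sum_repr x]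
    simp only [map_sum, map_smul, smul_eq_mul, dotProduct]
  refine ⟨b.repr x₀, B, fun i => φ (b i), fun w => ?_⟩
  rw [φ_eq, repr_foldl, dotProduct_mulVec]

namespace NQFA

variable {Alph : Type} (M : NQFA Alph)

lemma postOp_add (σ : Alph) (X Y : Matrix (Fin M.n) (Fin M.n) ℂ) :
    M.postOp σ (X + Y) = M.postOp σ X + M.postOp σ Y := by
  simp only [postOp, Matrix.mul_add, Matrix.add_mul, Finset.sum_add_distrib]

lemma postOp_smul (σ : Alph) (c : ℂ) (X : Matrix (Fin M.n) (Fin M.n) ℂ) :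
    M.postOp σ (c • X) = c • M.postOp σ X := by
  simp only [postOp, Matrix.mul_smul, Matrix.smul_mul, Finset.smul_sum]

def stepLinear (σ : Alph) :
    (Matrix (Fin M.n) (Fin M.n) ℂ × ℝ × ℝ) →ₗ[ℝ] (Matrix (Fin M.n) (Fin M.n) ℂ × ℝ × ℝ) where
  toFun s := M.step s σ
  map_add' s t := by
    simp only [step, Prod.fst_add, Prod.snd_add, postOp_add, Matrix.mul_add, Matrix.add_mul,
      Matrix.trace_add, Complex.add_re, Prod.mk_add_mk]
    congr 2 <;> ring
  map_smul' r s := by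
    simp only [step, Prod.smul_fst, Prod.smul_snd, ← Complex.coe_smul, postOp_smul,
      Matrix.mul_smul, Matrix.smul_mul, Matrix.trace_smul, smul_eq_mul, Complex.re_ofReal_mul,
      RingHom.id_apply, Prod.smul_mk, mul_add]

end NQFA

theorem finrank_real_complexMatrix_prod (n : ℕ) :
    finrank ℝ (Matrix (Fin n) (Fin n) ℂ × ℝ × ℝ) = 2 * n ^ 2 + 2 := by
  rw [finrank_prod, finrank_prod, finrank_self, finrank_matrix, Complex.finrank_real_complex,
    Fintype.card_fin]
  ring

/-- The acceptance probability function of an NQFA with `n` states is given by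
a product of real matrices of dimension at most `2n² + 2`. -/
theorem nqfa_accProb_matrix_product (Alph : Type) (M : NQFA Alph) :
    ∃ d : ℕ, d ≤ 2 * M.n ^ 2 + 2 ∧
      ∃ (u : Fin d → ℝ) (B : Alph → Matrix (Fin d) (Fin d) ℝ) (g : Fin d → ℝ),
        ∀ w : List Alph, M.accProb w = u ⬝ᵥ ((w.map B).prod).mulVec g := by
  obtain ⟨u, B, g, h⟩ := exists_dotProduct_prod_mulVec_eq_foldl M.stepLinear (M.rho0, 0, 0)
    (LinearMap.fst ℝ ℝ ℝ ∘ₗ LinearMap.snd ℝ _ _)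
  exact ⟨_, (finrank_real_complexMatrix_prod M.n).le, u, B, g, h⟩
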